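/- arXiv:1704.05912 — 3 statements merged into one kernel-verified Lean document; each statement's English description precedes it below -/
import Mathlib

section
/- At the disease-free steady state, the inequality λ₀(λ + η M⁰) > η α S_n⁰ holds; equivalently, h_o > (1/2)(1 - (λλ₀ + ηω₀)/(ηα)). -/
/-!
`h_o` is `b + √(b² + ω₀/α)` with `b = ½(1 - (λλ₀ + ηω₀)/(ηα))`, and `ω₀/α > 0` makes the square root
positive, so `h_o > b`. Multiplying this by `ηα > 0` and using `λ₀ M⁰ = ω₀ + α h_o` gives the first
inequality, since `λ₀(λ + η M⁰) = λλ₀ + ηω₀ + ηα h_o`.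
-/

lemma lt_add_sqrt_sq_add {b d : ℝ} (hd : 0 < d) : b < b + Real.sqrt (b ^ 2 + d) :=
  lt_add_of_pos_right b (Real.sqrt_pos.mpr (by positivity))

lemma half_mul_one_sub_div_lt_iff {c k h : ℝ} (hk : 0 < k) :
    (1/2) * (1 - c / k) < h ↔ k * (1 - h) < c + k * h := by
  rw [show (1/2) * (1 - c / k) = (k - c) / (2 * k) by field_simp, div_lt_iff₀ (by positivity)]
  constructor <;> intro _ <;> linarith

theorem stmt4_general (lam lam0 eta alpha omega0 : ℝ)
    (hlam0 : 0 < lam0) (heta : 0 < eta) (halpha : 0 < alpha)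
    (homega0 : 0 < omega0)
    (h_o Sn0 M0 : ℝ)
    (hdef : h_o = (1/2) * (1 - (lam * lam0 + eta * omega0) / (eta * alpha))
      + Real.sqrt ((1/4) * (1 - (lam * lam0 + eta * omega0) / (eta * alpha))^2
          + omega0 / alpha))
    (hSn : Sn0 = 1 - h_o)
    (hM : M0 = (omega0 + alpha * h_o) / lam0) :
    lam0 * (lam + eta * M0) > eta * alpha * Sn0 ∧
      h_o > (1/2) * (1 - (lam * lam0 + eta * omega0) / (eta * alpha)) := by
  have h_o_gt : (1/2) * (1 - (lam * lam0 + eta * omega0) / (eta * alpha)) < h_o := by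
    rw [hdef, show ∀ x : ℝ, (1/4) * x ^ 2 = ((1/2) * x) ^ 2 by intro x; ring]
    exact lt_add_sqrt_sq_add (div_pos homega0 halpha)
  have hM_expand : lam0 * (lam + eta * M0) = lam * lam0 + eta * omega0 + eta * alpha * h_o := by
    rw [hM]
    field_simp
    ring
  refine ⟨?_, h_o_gt⟩
  rw [hM_expand, hSn]
  exact (half_mul_one_sub_div_lt_iff (mul_pos heta halpha)).mp h_o_gt

/-- λ₀(λ + η M⁰) > η α S_n⁰; equivalently h_o > (1/2)(1 - (λλ₀+ηω₀)/(ηα)). -/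
theorem stmt4 (lam lam0 eta alpha omega0 : ℝ)
    (hlam : 0 < lam) (hlam0 : 0 < lam0) (heta : 0 < eta) (halpha : 0 < alpha)
    (homega0 : 0 < omega0)
    (h_o Sn0 M0 : ℝ)
    (hdef : h_o = (1/2) * (1 - (lam * lam0 + eta * omega0) / (eta * alpha))
      + Real.sqrt ((1/4) * (1 - (lam * lam0 + eta * omega0) / (eta * alpha))^2
          + omega0 / alpha))
    (hSn : Sn0 = 1 - h_o)
    (hM : M0 = (omega0 + alpha * h_o) / lam0) :
    lam0 * (lam + eta * M0) > eta * alpha * Sn0 ∧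
      h_o > (1/2) * (1 - (lam * lam0 + eta * omega0) / (eta * alpha)) :=
  stmt4_general lam lam0 eta alpha omega0 hlam0 heta halpha homega0 h_o Sn0 M0 hdef hSn hM
end

section
/- Suppose k = iμ with μ real satisfies k² + k(λ₀ + λ + a₆) + λ₀(λ + a₆) = α a₄ e^{−kτ} for some τ ≥ 0, where λ, λ₀, a₆, α, a₄ are positive with λ₀(λ + a₆) > α a₄. Then μ does not exist; i.e., the transcendental characteristic equation has no purely imaginary roots. -/
/-!
The left-hand side factors as `(k + λ₀)(k + (λ + a₆))`, and on the imaginary axis each factor has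
modulus at least the absolute value of its real part, so `|k² + … | ≥ λ₀(λ + a₆)`. The right-hand
side has modulus `α a₄` because `|e^{-iμτ}| = 1`, which is smaller.
-/

open Complex

lemma abs_mul_le_norm_I_mul_add_mul_I_mul_add (p q μ : ℝ) :
    |p * q| ≤ ‖(I * μ + p) * (I * μ + q)‖ := by
  have re_le (r : ℝ) : |r| ≤ ‖I * μ + r‖ := by
    simpa using abs_re_le_norm (I * μ + r)
  rw [abs_mul, norm_mul]
  exact mul_le_mul (re_le p) (re_le q) (abs_nonneg q) (norm_nonneg _)

lemma norm_exp_neg_I_mul_ofReal_mul_ofReal (μ τ : ℝ) : ‖exp (-(I * μ) * τ)‖ = 1 := by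
  rw [norm_exp]
  simp

theorem stmt8_general (lam lam0 alpha a4 a6 τ : ℝ)
    (halpha : 0 < alpha) (ha4 : 0 < a4)
    (hgt : lam0 * (lam + a6) > alpha * a4) :
    ¬ ∃ μ : ℝ, (Complex.I * μ)^2 + (Complex.I * μ) * ((lam0 : ℂ) + lam + a6)
        + (lam0 : ℂ) * ((lam : ℂ) + a6)
        = (alpha : ℂ) * (a4 : ℂ) * Complex.exp (-(Complex.I * μ) * τ) := by
  rintro ⟨μ, h⟩
  have factor : (I * μ)^2 + (I * μ) * ((lam0 : ℂ) + lam + a6) + (lam0 : ℂ) * ((lam : ℂ) + a6)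
      = (I * μ + lam0) * (I * μ + ((lam + a6 : ℝ) : ℂ)) := by
    push_cast; ring
  have norm_rhs : ‖(alpha : ℂ) * (a4 : ℂ) * exp (-(I * μ) * τ)‖ = alpha * a4 := by
    rw [norm_mul, norm_exp_neg_I_mul_ofReal_mul_ofReal, ← ofReal_mul, norm_real,
      Real.norm_of_nonneg (mul_pos halpha ha4).le, mul_one]
  have lower := abs_mul_le_norm_I_mul_add_mul_I_mul_add lam0 (lam + a6) μ
  rw [← factor, h, norm_rhs] at lower
  linarith [le_abs_self (lam0 * (lam + a6))]

/-- the transcendental characteristic equation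
k² + k(λ₀+λ+a₆) + λ₀(λ+a₆) = αa₄e^{−kτ} has no purely imaginary roots
k = iμ, provided λ₀(λ+a₆) > αa₄ with all parameters positive and τ ≥ 0. -/
theorem stmt8 (lam lam0 eta alpha a4 a6 τ : ℝ)
    (hlam : 0 < lam) (hlam0 : 0 < lam0) (halpha : 0 < alpha)
    (ha4 : 0 < a4) (ha6 : 0 < a6) (hτ : 0 ≤ τ)
    (hgt : lam0 * (lam + a6) > alpha * a4) :
    ¬ ∃ μ : ℝ, (Complex.I * μ)^2 + (Complex.I * μ) * ((lam0 : ℂ) + lam + a6)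
        + (lam0 : ℂ) * ((lam : ℂ) + a6)
        = (alpha : ℂ) * (a4 : ℂ) * Complex.exp (-(Complex.I * μ) * τ) :=
  stmt8_general lam lam0 alpha a4 a6 τ halpha ha4 hgt
end

section
/- If λλ₀ > α a₄, a₁ ≥ a₃ > 0, a₃(a₁+a₅+a₆) − a₁a₅ > 0, and λ₀, r, p, α, a₄ > 0, then λ₀g₃ − α a₃ a₄ > 0, where g₃ = [a₃(a₁+a₅+a₆) − a₁a₅] + rp(a₁ − a₃) + a₁λ. Explicitly: λ₀g₃ − αa₃a₄ = λ₀[a₃(a₁+a₅+a₆) − a₁a₅] + (λ₀rp + αa₄)(a₁ − a₃) + a₁(λλ₀ − αa₄) > 0. -/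
/-- the third Routh–Hurwitz condition λ₀g₃ − αa₃a₄ > 0, together
with its explicit decomposition. -/
theorem stmt13 (lam lam0 r p alpha a1 a3 a4 a5 a6 : ℝ)
    (hlam0 : 0 < lam0) (hr : 0 < r) (hp : 0 < p) (halpha : 0 < alpha)
    (ha3 : 0 < a3) (ha4 : 0 < a4) (h13 : a1 ≥ a3)
    (hll : lam * lam0 > alpha * a4)
    (hpos : a3 * (a1 + a5 + a6) - a1 * a5 > 0)
    (g3 : ℝ)
    (hg3 : g3 = (a3 * (a1 + a5 + a6) - a1 * a5) + r * p * (a1 - a3) + a1 * lam) :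
    lam0 * g3 - alpha * a3 * a4
      = lam0 * (a3 * (a1 + a5 + a6) - a1 * a5)
        + (lam0 * r * p + alpha * a4) * (a1 - a3)
        + a1 * (lam * lam0 - alpha * a4) ∧
    lam0 * g3 - alpha * a3 * a4 > 0 := by
  have decomposition : lam0 * g3 - alpha * a3 * a4
      = lam0 * (a3 * (a1 + a5 + a6) - a1 * a5)
        + (lam0 * r * p + alpha * a4) * (a1 - a3)
        + a1 * (lam * lam0 - alpha * a4) := by
    rw [hg3]; ring
  refine ⟨decomposition, ?_⟩
  have first_pos : 0 < lam0 * (a3 * (a1 + a5 + a6) - a1 * a5) := mul_pos hlam0 hpos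
  have second_nonneg : 0 ≤ (lam0 * r * p + alpha * a4) * (a1 - a3) :=
    mul_nonneg (by positivity) (sub_nonneg.mpr h13)
  have third_pos : 0 < a1 * (lam * lam0 - alpha * a4) :=
    mul_pos (ha3.trans_le h13) (sub_pos.mpr hll)
  rw [decomposition]
  linarith
end
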